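/- arXiv:math/0602369 — 6 statements merged into one kernel-verified Lean document; each statement's English description precedes it below -/
import Mathlib

section
/- Let N : ℝ → [0,∞) be a Young function, q > 2, and suppose N(r·s) ≤ r^q·(N(s) + 2) for all r ≥ 2 and s ≥ 0. Let (X,μ) be a measure space and f ∈ L¹(μ) ∩ L^q(μ) with f not μ-a.e. zero. Define λ := (2·(∫|f|^q dμ)·(N(1)+2))^{1/q} + 2·(∫|f| dμ)·sup_{0<s≤2} N(s)/s. Then ∫ N(|f|/λ) dμ ≤ 1, and consequently the Luxemburg norm satisfies ‖f‖_{L_N(μ)} ≤ λ. In particular L¹(μ) ∩ L^q(μ) embeds continuously into the Orlicz space L_N(μ). (Paper Lemma 3.2(ii).) -/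
/-!
For a convex `N` with `N 0 = 0` the slope `N s / s` increases, so the supremum `M` of the slopes
on `(0, 2]` is `N 2 / 2` and `N t ≤ M t` on `[0, 2]`; for `t ≥ 2` the growth condition with
`s = 1` gives `N t ≤ (N 1 + 2) t ^ q`. Hence `N t ≤ M t + (N 1 + 2) t ^ q` for all `t ≥ 0`, and
integrating at `t = |f| / λ` bounds `∫ N(|f| / λ)` by `M ‖f‖₁ / λ + (N 1 + 2) ‖f‖_q^q / λ ^ q`.
The two summands of `λ` are chosen so that each term is at most `1 / 2`.
-/

open Filter MeasureTheory
open scoped ENNReal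

/-- A Young function: continuous, convex, even, nonnegative, vanishing exactly at `0`,
with `N s / s → 0` as `s → 0⁺` and `N s / s → ∞` as `s → ∞`. -/
def IsYoungFunction (N : ℝ → ℝ) : Prop :=
  Continuous N ∧ ConvexOn ℝ Set.univ N ∧ (∀ s, N (-s) = N s) ∧
  (∀ s, 0 ≤ N s) ∧ (∀ s, N s = 0 ↔ s = 0) ∧
  Tendsto (fun s => N s / s) (nhdsWithin 0 (Set.Ioi 0)) (nhds 0) ∧
  Tendsto (fun s => N s / s) atTop atTop

/-- The Luxemburg norm `inf { λ > 0 : ∫ N(f/λ) dμ ≤ 1 }`, with `inf ∅ = ∞`. -/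
noncomputable def luxemburgNorm {X : Type*} [MeasurableSpace X] (N : ℝ → ℝ)
    (μ : Measure X) (f : X → ℝ) : ℝ≥0∞ :=
  ⨅ (lam : ℝ) (_ : 0 < lam) (_ : ∫⁻ x, ENNReal.ofReal (N (f x / lam)) ∂μ ≤ 1),
    ENNReal.ofReal lam

lemma ConvexOn.div_le_div_of_map_zero {N : ℝ → ℝ} {b s : ℝ} (hN : ConvexOn ℝ (Set.Icc 0 b) N)
    (h0 : N 0 = 0) (hs : s ∈ Set.Ioc 0 b) : N s / s ≤ N b / b := by
  have hb : 0 < b := hs.1.trans_le hs.2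
  simpa [h0] using hN.secant_mono (a := 0) ⟨le_rfl, hb.le⟩ ⟨hs.1.le, hs.2⟩ ⟨hb.le, le_rfl⟩
    hs.1.ne' hb.ne' hs.2

lemma ConvexOn.sSup_image_div_Ioc {N : ℝ → ℝ} {b : ℝ} (hN : ConvexOn ℝ (Set.Icc 0 b) N)
    (h0 : N 0 = 0) (hb : 0 < b) : sSup ((fun s => N s / s) '' Set.Ioc 0 b) = N b / b :=
  IsGreatest.csSup_eq ⟨⟨b, ⟨hb, le_rfl⟩, rfl⟩, by
    rintro _ ⟨s, hs, rfl⟩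
    exact hN.div_le_div_of_map_zero h0 hs⟩

lemma ConvexOn.le_div_mul_add_mul_rpow {N : ℝ → ℝ} {C q t : ℝ}
    (hN : ConvexOn ℝ (Set.Icc 0 2) N) (h0 : N 0 = 0) (hN2 : 0 ≤ N 2) (hC : 0 ≤ C)
    (hlarge : ∀ r, 2 ≤ r → N r ≤ C * r ^ q) (ht : 0 ≤ t) :
    N t ≤ N 2 / 2 * t + C * t ^ q := by
  have hCt : 0 ≤ C * t ^ q := by positivity
  rcases le_or_gt t 2 with ht2 | ht2
  · rcases ht.eq_or_lt with rfl | ht0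
    · simpa [h0] using hCt
    have := hN.div_le_div_of_map_zero h0 ⟨ht0, ht2⟩
    rw [div_le_iff₀ ht0] at this
    linarith
  · have : 0 ≤ N 2 / 2 * t := by positivity
    linarith [hlarge t ht2.le]

lemma lintegral_ofReal_comp_abs_div_le {X : Type*} [MeasurableSpace X] {μ : Measure X}
    {N : ℝ → ℝ} {a C q lam : ℝ} {f : X → ℝ}
    (hN : ∀ t, 0 ≤ t → N t ≤ a * t + C * t ^ q) (ha : 0 ≤ a) (hC : 0 ≤ C) (hlam : 0 < lam)
    (hf : Integrable f μ) (hfq : Integrable (fun x => |f x| ^ q) μ) :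
    ∫⁻ x, ENNReal.ofReal (N (|f x| / lam)) ∂μ ≤
      ENNReal.ofReal (a * (∫ x, |f x| ∂μ) / lam + C * (∫ x, |f x| ^ q ∂μ) / lam ^ q) := by
  set g : X → ℝ := fun x => a / lam * |f x| + C / lam ^ q * |f x| ^ q
  have hg : Integrable g μ := (hf.abs.const_mul _).add (hfq.const_mul _)
  have hg_nonneg : 0 ≤ᵐ[μ] g := ae_of_all _ fun x => by positivity
  have hNg (x : X) : N (|f x| / lam) ≤ g x := by
    calc N (|f x| / lam) ≤ a * (|f x| / lam) + C * (|f x| / lam) ^ q := hN _ (by positivity)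
      _ = g x := by rw [Real.div_rpow (abs_nonneg _) hlam.le]; ring
  calc ∫⁻ x, ENNReal.ofReal (N (|f x| / lam)) ∂μ
      ≤ ∫⁻ x, ENNReal.ofReal (g x) ∂μ := lintegral_mono fun x => ENNReal.ofReal_le_ofReal (hNg x)
    _ = ENNReal.ofReal (∫ x, g x ∂μ) := (ofReal_integral_eq_lintegral_ofReal hg hg_nonneg).symm
    _ = _ := by
      rw [integral_add (hf.abs.const_mul _) (hfq.const_mul _), integral_const_mul,
        integral_const_mul]
      ring_nf

lemma le_rpow_one_div_add_rpow {x y q : ℝ} (hx : 0 ≤ x) (hy : 0 ≤ y) (hq : 0 < q) :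
    x ≤ (x ^ (1 / q) + y) ^ q :=
  calc x = (x ^ (1 / q)) ^ q := by rw [← Real.rpow_mul hx, one_div_mul_cancel hq.ne', Real.rpow_one]
    _ ≤ (x ^ (1 / q) + y) ^ q :=
      Real.rpow_le_rpow (by positivity) (le_add_of_nonneg_right hy) hq.le

lemma mul_div_add_mul_div_rpow_le_one {a C I J q : ℝ} (ha : 0 ≤ a) (hC : 0 ≤ C) (hI : 0 ≤ I)
    (hJ : 0 ≤ J) (hq : 0 < q) (hlam : 0 < (2 * J * C) ^ (1 / q) + 2 * I * a) :
    a * I / ((2 * J * C) ^ (1 / q) + 2 * I * a)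
      + C * J / ((2 * J * C) ^ (1 / q) + 2 * I * a) ^ q ≤ 1 := by
  set lam := (2 * J * C) ^ (1 / q) + 2 * I * a
  have h1 : 2 * I * a ≤ lam := le_add_of_nonneg_left (by positivity)
  have h2 : 2 * J * C ≤ lam ^ q := le_rpow_one_div_add_rpow (by positivity) (by positivity) hq
  have hlamq : 0 < lam ^ q := Real.rpow_pos_of_pos hlam q
  rw [div_add_div _ _ hlam.ne' hlamq.ne', div_le_one (by positivity)]
  nlinarith

lemma integral_abs_pos {X : Type*} [MeasurableSpace X] {μ : Measure X} {f : X → ℝ}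
    (hf : Integrable f μ) (hf0 : ¬ f =ᵐ[μ] 0) : 0 < ∫ x, |f x| ∂μ := by
  refine (integral_nonneg fun x => abs_nonneg (f x)).lt_of_ne fun h => hf0 ?_
  filter_upwards [(integral_eq_zero_iff_of_nonneg (fun x => abs_nonneg (f x)) hf.abs).mp h.symm]
    with x hx
  exact abs_eq_zero.mp hx

lemma luxemburgNorm_le_of_lintegral_abs_le_one {X : Type*} [MeasurableSpace X] {μ : Measure X}
    {N : ℝ → ℝ} {f : X → ℝ} {lam : ℝ} (heven : ∀ s, N (-s) = N s) (hlam : 0 < lam)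
    (h : ∫⁻ x, ENNReal.ofReal (N (|f x| / lam)) ∂μ ≤ 1) :
    luxemburgNorm N μ f ≤ ENNReal.ofReal lam := by
  have habs (x : X) : N (f x / lam) = N (|f x| / lam) := by
    rcases abs_cases (f x) with ⟨hx, _⟩ | ⟨hx, _⟩
    · rw [hx]
    · rw [hx, neg_div, heven]
  simp only [← habs] at h
  exact iInf_le_of_le lam (iInf_le_of_le hlam (iInf_le_of_le h le_rfl))

theorem stmt1_general {X : Type*} [MeasurableSpace X] (μ : Measure X)
    (N : ℝ → ℝ) (hN : IsYoungFunction N) (q : ℝ) (hq : 2 < q)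
    (hΔ : ∀ r s : ℝ, 2 ≤ r → 0 ≤ s → N (r * s) ≤ r ^ q * (N s + 2))
    (f : X → ℝ)
    (hf1 : MemLp f 1 μ) (hfq : MemLp f (ENNReal.ofReal q) μ)
    (hfne : ¬ f =ᵐ[μ] 0) :
    (∫⁻ x, ENNReal.ofReal (N (|f x| /
        ((2 * (∫ x, |f x| ^ q ∂μ) * (N 1 + 2)) ^ (1 / q)
          + 2 * (∫ x, |f x| ∂μ) * sSup ((fun s => N s / s) '' Set.Ioc (0:ℝ) 2)))) ∂μ) ≤ 1 ∧
    luxemburgNorm N μ f ≤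
      ENNReal.ofReal ((2 * (∫ x, |f x| ^ q ∂μ) * (N 1 + 2)) ^ (1 / q)
          + 2 * (∫ x, |f x| ∂μ) * sSup ((fun s => N s / s) '' Set.Ioc (0:ℝ) 2)) := by
  obtain ⟨-, hconv, heven, hnonneg, hzero, -, -⟩ := hN
  have hconv₂ : ConvexOn ℝ (Set.Icc 0 2) N := hconv.subset (Set.subset_univ _) (convex_Icc 0 2)
  have h0 : N 0 = 0 := (hzero 0).mpr rfl
  rw [hconv₂.sSup_image_div_Ioc h0 two_pos]
  have hN2 : 0 < N 2 := (hnonneg 2).lt_of_ne' fun h => two_ne_zero ((hzero 2).mp h)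
  have hC : 0 ≤ N 1 + 2 := by linarith [hnonneg 1]
  have hq₀ : 0 < q := by linarith
  have hf : Integrable f μ := memLp_one_iff_integrable.mp hf1
  have hf_rpow : Integrable (fun x => |f x| ^ q) μ := by
    simpa [ENNReal.toReal_ofReal hq₀.le] using
      hfq.integrable_norm_rpow (by simpa using hq₀) ENNReal.ofReal_ne_top
  have hlam : 0 < (2 * (∫ x, |f x| ^ q ∂μ) * (N 1 + 2)) ^ (1 / q)
      + 2 * (∫ x, |f x| ∂μ) * (N 2 / 2) := by
    have := integral_abs_pos hf hfne
    positivity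
  have hpointwise (t : ℝ) (ht : 0 ≤ t) : N t ≤ N 2 / 2 * t + (N 1 + 2) * t ^ q :=
    hconv₂.le_div_mul_add_mul_rpow h0 hN2.le hC
      (fun r hr => by simpa [mul_comm] using hΔ r 1 hr zero_le_one) ht
  have hmodular := (lintegral_ofReal_comp_abs_div_le hpointwise (by positivity) hC hlam hf
    hf_rpow).trans <| ENNReal.ofReal_le_one.mpr <| mul_div_add_mul_div_rpow_le_one
      (by positivity) hC (integral_nonneg fun x => abs_nonneg _)
      (integral_nonneg fun x => by positivity) hq₀ hlam
  exact ⟨hmodular, luxemburgNorm_le_of_lintegral_abs_le_one heven hlam hmodular⟩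

/-- Paper Lemma 3.2(ii): `L¹(μ) ∩ L^q(μ)` embeds continuously into the Orlicz space
`L_N(μ)`, with the explicit bound `‖f‖_{L_N} ≤ λ` for the stated `λ`. -/
theorem stmt1 {X : Type*} [MeasurableSpace X] (μ : Measure X)
    (N : ℝ → ℝ) (hN : IsYoungFunction N) (q : ℝ) (hq : 2 < q)
    (hΔ : ∀ r s : ℝ, 2 ≤ r → 0 ≤ s → N (r * s) ≤ r ^ q * (N s + 2))
    (f : X → ℝ) (hf : Measurable f)
    (hf1 : MemLp f 1 μ) (hfq : MemLp f (ENNReal.ofReal q) μ)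
    (hfne : ¬ f =ᵐ[μ] 0) :
    (∫⁻ x, ENNReal.ofReal (N (|f x| /
        ((2 * (∫ x, |f x| ^ q ∂μ) * (N 1 + 2)) ^ (1 / q)
          + 2 * (∫ x, |f x| ∂μ) * sSup ((fun s => N s / s) '' Set.Ioc (0:ℝ) 2)))) ∂μ) ≤ 1 ∧
    luxemburgNorm N μ f ≤
      ENNReal.ofReal ((2 * (∫ x, |f x| ^ q ∂μ) * (N 1 + 2)) ^ (1 / q)
          + 2 * (∫ x, |f x| ∂μ) * sSup ((fun s => N s / s) '' Set.Ioc (0:ℝ) 2)) :=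
  stmt1_general μ N hN q hq hΔ f hf1 hfq hfne
end

section
/- Let m ≥ 1, let r₁,…,r_m > 0 and δ₁,…,δ_m > 0, and define the Young function N(s) := Σ_{i=1}^m δ_i·|s|^{r_i+1}. Let N*(s) := sup{ r|s| − N(r) : r ≥ 0 } be its conjugate, set r := min_i r_i and θ := 2^{1/r}. Then N*(2s) ≤ θ^{r+1}·N*(s) for all s ∈ ℝ; in particular N* is Δ₂-regular. (Paper Example 3.5(i), equation (3.11).) -/
/-!
Substituting `ρ = θ σ` in the supremum defining `N*(2s)` gives
`θσ · 2|s| − N(θσ)`. Since every exponent `rᵢ + 1` is at least `r + 1` and `θ ≥ 1`,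
`N(θσ) ≥ θ^{r+1} N(σ)`, and `θ` is chosen so that `2θ = θ^{r+1}`; hence each term is at most
`θ^{r+1} (σ|s| − N(σ)) ≤ θ^{r+1} N*(s)`. The supremum defining `N*(s)` is finite because `N`
dominates `δ_j |t|^{r_j+1}` with `r_j + 1 > 1`, and `ρ a − c ρ^p` is bounded above by Young's
inequality.
-/

open Finset

/-- The conjugate Young function `N*(s) := sup { r·|s| − N(r) : r ≥ 0 }`. -/
noncomputable def youngConj (N : ℝ → ℝ) (s : ℝ) : ℝ :=
  sSup {v : ℝ | ∃ r : ℝ, 0 ≤ r ∧ v = r * |s| - N r}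

lemma exists_mul_le_mul_rpow_add {c p : ℝ} (hc : 0 < c) (hp : 1 < p) (a : ℝ) :
    ∃ K : ℝ, ∀ ρ : ℝ, 0 ≤ ρ → ρ * a ≤ c * ρ ^ p + K := by
  have hpq : p.HolderConjugate p.conjExponent := .conjExponent hp
  have hcp : 0 < c * p := by positivity
  -- Young's inequality for `(w ρ) (|a| / w)`, with `w ^ p = c p`.
  set w : ℝ := (c * p) ^ (1 / p)
  have hw : 0 < w := Real.rpow_pos_of_pos hcp _
  refine ⟨(|a| / w) ^ p.conjExponent / p.conjExponent, fun ρ hρ => ?_⟩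
  have young := Real.young_inequality_of_nonneg (mul_nonneg hw.le hρ)
    (div_nonneg (abs_nonneg a) hw.le) hpq
  have hwρ : (w * ρ) ^ p = c * p * ρ ^ p := by
    rw [Real.mul_rpow hw.le hρ, ← Real.rpow_mul hcp.le, one_div_mul_cancel hpq.ne_zero,
      Real.rpow_one]
  calc ρ * a ≤ ρ * |a| := mul_le_mul_of_nonneg_left (le_abs_self a) hρ
    _ = w * ρ * (|a| / w) := by field_simp
    _ ≤ c * p * ρ ^ p / p + (|a| / w) ^ p.conjExponent / p.conjExponent := by
        rwa [← hwρ]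
    _ = c * ρ ^ p + (|a| / w) ^ p.conjExponent / p.conjExponent := by
        rw [mul_right_comm, mul_div_cancel_right₀ _ hpq.ne_zero]

lemma bddAbove_youngConj_set {N : ℝ → ℝ} {c p : ℝ} (hc : 0 < c) (hp : 1 < p)
    (hN : ∀ ρ, c * |ρ| ^ p ≤ N ρ) (a : ℝ) :
    BddAbove {v : ℝ | ∃ ρ : ℝ, 0 ≤ ρ ∧ v = ρ * a - N ρ} := by
  obtain ⟨K, hK⟩ := exists_mul_le_mul_rpow_add hc hp a
  refine ⟨K, ?_⟩
  rintro _ ⟨ρ, hρ, rfl⟩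
  have hNρ := hN ρ
  rw [abs_of_nonneg hρ] at hNρ
  linarith [hK ρ hρ]

lemma youngConj_mul_le {N : ℝ → ℝ} {θ C l s : ℝ} (hθ : 0 < θ) (hl : 0 ≤ l) (hlθ : l * θ ≤ C)
    (hN : ∀ σ, 0 ≤ σ → C * N σ ≤ N (θ * σ))
    (hbdd : BddAbove {v : ℝ | ∃ ρ : ℝ, 0 ≤ ρ ∧ v = ρ * |s| - N ρ}) :
    youngConj N (l * s) ≤ C * youngConj N s := by
  have hC : 0 ≤ C := (mul_nonneg hl hθ.le).trans hlθ
  refine csSup_le ⟨_, 0, le_rfl, rfl⟩ ?_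
  rintro _ ⟨ρ, hρ, rfl⟩
  set σ := ρ / θ
  have hσ : 0 ≤ σ := div_nonneg hρ hθ.le
  have hθσ : θ * σ = ρ := mul_div_cancel₀ ρ hθ.ne'
  have hσs : σ * |s| - N σ ≤ youngConj N s := le_csSup hbdd ⟨σ, hσ, rfl⟩
  have hσs_nonneg : 0 ≤ σ * |s| := mul_nonneg hσ (abs_nonneg s)
  calc ρ * |l * s| - N ρ = l * θ * (σ * |s|) - N (θ * σ) := by
        rw [hθσ, abs_mul, abs_of_nonneg hl, ← hθσ]
        ring
    _ ≤ C * (σ * |s|) - C * N σ := by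
        gcongr
        exact hN σ hσ
    _ = C * (σ * |s| - N σ) := by ring
    _ ≤ C * youngConj N s := mul_le_mul_of_nonneg_left hσs hC

lemma rpow_mul_sum_abs_rpow_le {ι : Type*} (t : Finset ι) {δ e : ι → ℝ} (hδ : ∀ i, 0 ≤ δ i)
    {q θ : ℝ} (hθ : 1 ≤ θ) (hq : ∀ i, q ≤ e i) (σ : ℝ) :
    θ ^ q * ∑ i ∈ t, δ i * |σ| ^ e i ≤ ∑ i ∈ t, δ i * |θ * σ| ^ e i := by
  have hθ0 : 0 ≤ θ := zero_le_one.trans hθ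
  rw [mul_sum]
  refine sum_le_sum fun i _ => ?_
  rw [abs_mul, abs_of_nonneg hθ0, Real.mul_rpow hθ0 (abs_nonneg σ), mul_left_comm]
  have hδi := hδ i
  gcongr
  exact hq i

lemma rpow_one_div_rpow_add_one {a r : ℝ} (ha : 0 < a) (hr : r ≠ 0) :
    (a ^ (1 / r)) ^ (r + 1) = a * a ^ (1 / r) := by
  rw [Real.rpow_add (Real.rpow_pos_of_pos ha _), ← Real.rpow_mul ha.le, one_div_mul_cancel hr,
    Real.rpow_one, Real.rpow_one]

theorem stmt3_general (m : ℕ) (r δ : Fin m → ℝ)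
    (hr : ∀ i, 0 < r i) (hδ : ∀ i, 0 < δ i)
    (rmin : ℝ) (hrmin : IsLeast (Set.range r) rmin) :
    ∀ s : ℝ,
      youngConj (fun t => ∑ i, δ i * |t| ^ (r i + 1)) (2 * s) ≤
        ((2 : ℝ) ^ ((1 : ℝ) / rmin)) ^ (rmin + 1) *
          youngConj (fun t => ∑ i, δ i * |t| ^ (r i + 1)) s := by
  intro s
  obtain ⟨⟨j, rfl⟩, hmin⟩ := hrmin
  have hθ : 1 ≤ (2 : ℝ) ^ ((1 : ℝ) / r j) :=
    Real.one_le_rpow one_le_two (one_div_nonneg.mpr (hr j).le)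
  refine youngConj_mul_le (zero_lt_one.trans_le hθ) zero_le_two ?_ ?_ ?_
  · rw [rpow_one_div_rpow_add_one two_pos (hr j).ne']
  · intro σ _
    exact rpow_mul_sum_abs_rpow_le _ (fun i => (hδ i).le) hθ
      (fun i => by linarith [hmin ⟨i, rfl⟩]) σ
  · refine bddAbove_youngConj_set (hδ j) (lt_add_of_pos_left 1 (hr j)) (fun ρ => ?_) _
    exact single_le_sum (f := fun i => δ i * |ρ| ^ (r i + 1))
      (fun i _ => mul_nonneg (hδ i).le (Real.rpow_nonneg (abs_nonneg ρ) _)) (mem_univ j)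

/-- Paper Example 3.5(i), equation (3.11): for `N(s) = Σ δᵢ |s|^{rᵢ+1}`, its conjugate
satisfies `N*(2s) ≤ θ^{r+1} N*(s)` where `r = min rᵢ` and `θ = 2^{1/r}`; in particular
`N*` is Δ₂-regular. -/
theorem stmt3 (m : ℕ) (hm : 1 ≤ m) (r δ : Fin m → ℝ)
    (hr : ∀ i, 0 < r i) (hδ : ∀ i, 0 < δ i)
    (rmin : ℝ) (hrmin : IsLeast (Set.range r) rmin) :
    ∀ s : ℝ,
      youngConj (fun t => ∑ i, δ i * |t| ^ (r i + 1)) (2 * s) ≤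
        ((2 : ℝ) ^ ((1 : ℝ) / rmin)) ^ (rmin + 1) *
          youngConj (fun t => ∑ i, δ i * |t| ^ (r i + 1)) s :=
  stmt3_general m r δ hr hδ rmin hrmin
end

section
/- Let m ≥ 1, r₁,…,r_m ∈ [1,∞), δ₁,…,δ_m > 0, and define Ψ(s) := sign(s)·Σ_{i=1}^m δ_i·|s|^{r_i}. Then for all a,b ∈ ℝ: (Ψ(a) − Ψ(b))·(a − b) ≥ Σ_{i=1}^m δ_i·2^{1−r_i}·|a−b|^{r_i+1}. In particular, for a single exponent r ≥ 1, (sign(a)|a|^r − sign(b)|b|^r)(a−b) ≥ 2^{1−r}|a−b|^{r+1} for all a,b ∈ ℝ. (Paper Example 3.5(ii), the strong monotonicity (Ψ1)'.) -/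
-- real versions of the two power inequalities
lemma sup_rpow {x y p : ℝ} (hx : 0 ≤ x) (hy : 0 ≤ y) (hp : 1 ≤ p) :
    x ^ p + y ^ p ≤ (x + y) ^ p := by
  have h := NNReal.add_rpow_le_rpow_add x.toNNReal y.toNNReal hp
  have hc : ((x.toNNReal ^ p + y.toNNReal ^ p : NNReal) : ℝ)
      ≤ (((x.toNNReal + y.toNNReal) ^ p : NNReal) : ℝ) := by exact_mod_cast h
  simpa [NNReal.coe_rpow, Real.coe_toNNReal x hx, Real.coe_toNNReal y hy] using hc

lemma pm_rpow {x y p : ℝ} (hx : 0 ≤ x) (hy : 0 ≤ y) (hp : 1 ≤ p) :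
    (x + y) ^ p ≤ 2 ^ (p - 1) * (x ^ p + y ^ p) := by
  have h := NNReal.rpow_add_le_mul_rpow_add_rpow x.toNNReal y.toNNReal hp
  have hc : (((x.toNNReal + y.toNNReal) ^ p : NNReal) : ℝ)
      ≤ (((2 : NNReal) ^ (p - 1) * (x.toNNReal ^ p + y.toNNReal ^ p) : NNReal) : ℝ) := by
    exact_mod_cast h
  simpa [NNReal.coe_rpow, Real.coe_toNNReal x hx, Real.coe_toNNReal y hy] using hc

lemma phi_nonneg_eval {s p : ℝ} (hp : 1 ≤ p) (hs : 0 ≤ s) :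
    Real.sign s * |s| ^ p = s ^ p := by
  rcases eq_or_lt_of_le hs with h | h
  · simp [← h, Real.zero_rpow (by linarith : p ≠ 0), Real.sign_zero]
  · rw [Real.sign_of_pos h, abs_of_pos h, one_mul]

lemma key_lemma {p : ℝ} (hp : 1 ≤ p) (s t : ℝ) (h : 0 ≤ s + t) :
    2 ^ (1 - p) * (s + t) ^ p ≤ Real.sign s * |s| ^ p + Real.sign t * |t| ^ p := by
  have h2 : (0:ℝ) < 2 ^ (1 - p) := Real.rpow_pos_of_pos (by norm_num) _
  have h2le : (2:ℝ) ^ (1 - p) ≤ 1 :=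
    Real.rpow_le_one_of_one_le_of_nonpos (by norm_num) (by linarith)
  -- wlog t ≤ s
  wlog hts : t ≤ s with H
  · have := H hp t s (by linarith) h2 h2le (by linarith)
    linarith [this, add_comm s t ▸ this]
  rcases le_or_gt 0 t with ht | ht
  · have hs : 0 ≤ s := le_trans ht hts
    rw [phi_nonneg_eval hp hs, phi_nonneg_eval hp ht]
    have := pm_rpow hs ht hp
    have h2e : (2:ℝ) ^ (1 - p) * 2 ^ (p - 1) = 1 := by
      rw [← Real.rpow_add (by norm_num)]; norm_num
    have h3 : (2:ℝ) ^ (1 - p) * (2 ^ (p - 1) * (s ^ p + t ^ p)) = s ^ p + t ^ p := by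
      rw [← mul_assoc, h2e, one_mul]
    have h4 := mul_le_mul_of_nonneg_left this h2.le
    linarith
  · -- t < 0 ≤ s, set b = -t
    have hs : 0 ≤ s := by nlinarith
    have hb : 0 < -t := by linarith
    rw [phi_nonneg_eval hp hs]
    have hodd : Real.sign t * |t| ^ p = -((-t) ^ p) := by
      have : Real.sign (-t) * |(-t)| ^ p = (-t) ^ p := phi_nonneg_eval hp hb.le
      rw [Real.sign_neg, abs_neg] at this; linarith
    rw [hodd]
    have hsplit : s = (s + t) + (-t) := by ring
    have hsup : (s + t) ^ p + (-t) ^ p ≤ s ^ p := by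
      calc (s + t) ^ p + (-t) ^ p ≤ ((s + t) + (-t)) ^ p := sup_rpow h hb.le hp
        _ = s ^ p := by rw [← hsplit]
    have hmul : 2 ^ (1 - p) * (s + t) ^ p ≤ (s + t) ^ p := by
      nlinarith [Real.rpow_nonneg h p]
    linarith

lemma single {p : ℝ} (hp : 1 ≤ p) (a b : ℝ) :
    (Real.sign a * |a| ^ p - Real.sign b * |b| ^ p) * (a - b)
      ≥ (2 : ℝ) ^ (1 - p) * |a - b| ^ (p + 1) := by
  have main : ∀ a b : ℝ, b < a →
      (Real.sign a * |a| ^ p - Real.sign b * |b| ^ p) * (a - b)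
        ≥ (2 : ℝ) ^ (1 - p) * |a - b| ^ (p + 1) := by
    intro a b hab
    have hd : 0 < a - b := by linarith
    have hk := key_lemma hp a (-b) (by linarith)
    have hodd : Real.sign (-b) * |(-b)| ^ p = -(Real.sign b * |b| ^ p) := by
      rw [Real.sign_neg, abs_neg]; ring
    rw [hodd] at hk
    have habs : |a - b| = a - b := abs_of_pos hd
    rw [habs, Real.rpow_add_one hd.ne']
    have : a + -b = a - b := by ring
    rw [this] at hk
    nlinarith [Real.rpow_nonneg hd.le p]
  rcases lt_trichotomy a b with h | h | h
  · have := main b a h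
    have e1 : |a - b| = |b - a| := abs_sub_comm a b
    rw [e1]; nlinarith [this]
  · subst h
    simp [Real.zero_rpow (by positivity : p + 1 ≠ 0)]
  · exact main a b h

/-- Paper Example 3.5(ii), the strong monotonicity `(Ψ1)'`: for
`Ψ(s) = sign(s)·Σ δᵢ |s|^{rᵢ}` with `rᵢ ≥ 1`, `δᵢ > 0`, one has
`(Ψ(a) − Ψ(b))(a − b) ≥ Σ δᵢ 2^{1−rᵢ} |a−b|^{rᵢ+1}`; in particular for a single
exponent `ρ ≥ 1`, `(sign(a)|a|^ρ − sign(b)|b|^ρ)(a−b) ≥ 2^{1−ρ}|a−b|^{ρ+1}`. -/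
theorem stmt4 (m : ℕ) (hm : 1 ≤ m) (r δ : Fin m → ℝ)
    (hr : ∀ i, 1 ≤ r i) (hδ : ∀ i, 0 < δ i) :
    (∀ a b : ℝ,
      ((Real.sign a * ∑ i, δ i * |a| ^ r i) - (Real.sign b * ∑ i, δ i * |b| ^ r i)) * (a - b)
        ≥ ∑ i, δ i * (2 : ℝ) ^ (1 - r i) * |a - b| ^ (r i + 1)) ∧
    (∀ ρ : ℝ, 1 ≤ ρ → ∀ a b : ℝ,
      (Real.sign a * |a| ^ ρ - Real.sign b * |b| ^ ρ) * (a - b)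
        ≥ (2 : ℝ) ^ (1 - ρ) * |a - b| ^ (ρ + 1)) := by
  constructor
  · intro a b
    have e : ((Real.sign a * ∑ i, δ i * |a| ^ r i) - (Real.sign b * ∑ i, δ i * |b| ^ r i)) * (a - b)
        = ∑ i, δ i * ((Real.sign a * |a| ^ r i - Real.sign b * |b| ^ r i) * (a - b)) := by
      rw [Finset.mul_sum, Finset.mul_sum, ← Finset.sum_sub_distrib, Finset.sum_mul]
      apply Finset.sum_congr rfl; intro i _; ring
    rw [e]
    apply Finset.sum_le_sum
    intro i _
    have := single (hr i) a b
    have hδi := (hδ i).le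
    calc δ i * (2:ℝ) ^ (1 - r i) * |a - b| ^ (r i + 1)
        = δ i * ((2:ℝ) ^ (1 - r i) * |a - b| ^ (r i + 1)) := by ring
      _ ≤ δ i * ((Real.sign a * |a| ^ r i - Real.sign b * |b| ^ r i) * (a - b)) := by
          exact mul_le_mul_of_nonneg_left this hδi
  · intro ρ hρ a b; exact single hρ a b
end

section
/- Let N : ℝ → [0,∞) be a Young function with conjugate N*(s) := sup{ r|s| − N(r) : r ≥ 0 }. Let κ ∈ {0,1}, c ≥ 1, f ≥ 0 a real number, and let Ψ : ℝ → ℝ be nondecreasing and satisfy s·Ψ(s) ≥ N(s) − κ·f and s·Ψ(s) ≤ c·(N(s) + κ·f) for all s ∈ ℝ. Then for all s ∈ ℝ: N*(c^{-1}·Ψ(s)) ≤ N(s) + κ·(3f + N*(c^{-1}·Ψ(0))). (Paper Lemma 3.6(i), stated pointwise for fixed (t,ω); κ = 1_{μ(E)<∞}.) -/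
open Filter

lemma youngConj_bddAbove (N : ℝ → ℝ) (hN : IsYoungFunction N) (t : ℝ) :
    BddAbove {v : ℝ | ∃ r : ℝ, 0 ≤ r ∧ v = r * |t| - N r} := by
  obtain ⟨-, -, -, hpos, -, -, htop⟩ := hN
  obtain ⟨R, hR⟩ := eventually_atTop.mp (htop.eventually_ge_atTop |t|)
  refine ⟨max R 1 * |t|, ?_⟩
  rintro v ⟨r, hr, rfl⟩
  rcases le_or_gt r (max R 1) with h | h
  · have : r * |t| ≤ max R 1 * |t| := mul_le_mul_of_nonneg_right h (abs_nonneg t)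
    have := hpos r; linarith
  · have hrpos : (0:ℝ) < r := lt_of_lt_of_le (by positivity) h.le
    have h1 : N r / r ≥ |t| := hR r (le_trans (le_max_left _ _) h.le)
    have : r * |t| ≤ N r := by
      rw [ge_iff_le, le_div_iff₀ hrpos] at h1; linarith [h1]
    have : max R 1 * |t| ≥ 0 := by positivity
    linarith

lemma youngConj_nonneg (N : ℝ → ℝ) (hN : IsYoungFunction N) (t : ℝ) :
    0 ≤ youngConj N t := by
  have hmem : (0:ℝ) ∈ {v : ℝ | ∃ r : ℝ, 0 ≤ r ∧ v = r * |t| - N r} := by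
    refine ⟨0, le_rfl, ?_⟩
    have : N 0 = 0 := (hN.2.2.2.2.1 0).mpr rfl
    simp [this]
  exact le_csSup (youngConj_bddAbove N hN t) hmem

/-- Paper Lemma 3.6(i): under `(Ψ2)`, `(Ψ3)` one has
`N*(c⁻¹ Ψ(s)) ≤ N(s) + κ (3f + N*(c⁻¹ Ψ(0)))`. -/
theorem stmt7 (N : ℝ → ℝ) (hN : IsYoungFunction N) (κ : ℝ) (hκ : κ = 0 ∨ κ = 1)
    (c : ℝ) (hc : 1 ≤ c) (f : ℝ) (hf : 0 ≤ f)
    (Ψ : ℝ → ℝ) (hmono : Monotone Ψ)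
    (h1 : ∀ s : ℝ, N s - κ * f ≤ s * Ψ s)
    (h2 : ∀ s : ℝ, s * Ψ s ≤ c * (N s + κ * f)) :
    ∀ s : ℝ, youngConj N (c⁻¹ * Ψ s) ≤ N s + κ * (3 * f + youngConj N (c⁻¹ * Ψ 0)) := by
  intro s
  have heven := hN.2.2.1
  have hpos := hN.2.2.2.1
  have hκ0 : 0 ≤ κ := by rcases hκ with h | h <;> simp [h]
  have hc0 : (0:ℝ) < c := lt_of_lt_of_le one_pos hc
  have hkf : 0 ≤ κ * f := mul_nonneg hκ0 hf
  have hconj0 : 0 ≤ youngConj N (c⁻¹ * Ψ 0) := youngConj_nonneg N hN _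
  have hmain : youngConj N (c⁻¹ * Ψ s) ≤ N s + κ * f := by
    apply csSup_le
    · exact ⟨0 * |c⁻¹ * Ψ s| - N 0, 0, le_rfl, rfl⟩
    rintro v ⟨r, hr, rfl⟩
    have habs : |c⁻¹ * Ψ s| = c⁻¹ * |Ψ s| := by
      rw [abs_mul, abs_of_nonneg (by positivity : (0:ℝ) ≤ c⁻¹)]
    have hkey : r * |Ψ s| ≤ c * (N s + N r + κ * f) := by
      rcases le_or_gt 0 (Ψ s) with hp | hn
      · rw [abs_of_nonneg hp]
        rcases le_or_gt s r with h | h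
        · have hΨ : Ψ s ≤ Ψ r := hmono h
          have h2r := h2 r
          have : r * Ψ s ≤ r * Ψ r := mul_le_mul_of_nonneg_left hΨ hr
          nlinarith [hpos s, hpos r]
        · have : r * Ψ s ≤ s * Ψ s := mul_le_mul_of_nonneg_right h.le hp
          have h2s := h2 s
          nlinarith [hpos r]
      · rw [abs_of_neg hn]
        rcases le_or_gt (-r) s with h | h
        · have hΨ : Ψ (-r) ≤ Ψ s := hmono h
          have h2r := h2 (-r)
          rw [heven r] at h2r
          have : r * (-Ψ s) ≤ r * (-Ψ (-r)) :=
            mul_le_mul_of_nonneg_left (by linarith) hr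
          nlinarith [hpos s, hpos r]
        · have hrs : r ≤ -s := by linarith
          have : r * (-Ψ s) ≤ (-s) * (-Ψ s) :=
            mul_le_mul_of_nonneg_right hrs (by linarith)
          have h2s := h2 s
          nlinarith [hpos r]
    have hstep : c⁻¹ * (r * |Ψ s|) ≤ N s + N r + κ * f := by
      have h := mul_le_mul_of_nonneg_left hkey (by positivity : (0:ℝ) ≤ c⁻¹)
      rw [← mul_assoc c⁻¹ c, inv_mul_cancel₀ (ne_of_gt hc0), one_mul] at h
      exact (mul_assoc c⁻¹ r _ ▸ h)
    rw [habs]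
    nlinarith [hstep]
  have : κ * f ≤ κ * (3 * f + youngConj N (c⁻¹ * Ψ 0)) := by nlinarith
  linarith
end

section
/- Let m ≥ 1, r₁,…,r_m > 0 and ε₁,…,ε_m > 0, define the Young function N(s) := Σ_{i=1}^m ε_i·|s|^{r_i+1}, and let N* denote its conjugate. For each i set c_i := (1/(r_i+1))^{1/r_i}·r_i/(r_i+1). Let a₁,…,a_m satisfy 0 ≤ a_i ≤ ε_i for each i, and let Φ₀ : ℝ → ℝ satisfy |Φ₀(s)| ≤ Σ_{i=1}^m a_i·|s|^{r_i} for all s. Then for all s ∈ ℝ: N*(Φ₀(s)) ≤ Σ_{i=1}^m a_i·c_i·|s|^{r_i+1}; in particular N*(Φ₀(s)) ≤ c̃·N(s) with c̃ := max_i (a_i·c_i/ε_i). (Paper Lemma 3.6(ii).) -/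
open Real Finset

theorem youngConj_le {N : ℝ → ℝ} {s B : ℝ} (hB : 0 ≤ B)
    (h : ∀ t, 0 ≤ t → t * |s| - N t ≤ B) : youngConj N s ≤ B :=
  Real.sSup_le (by rintro v ⟨t, ht, rfl⟩; exact h t ht) hB

/-- The constant `c_r` with `sup_{t ≥ 0} (t u − t^{r+1}) = c_r u^{(r+1)/r}`. -/
noncomputable def powConjConst (r : ℝ) : ℝ :=
  (1 / (r + 1)) ^ (1 / r) * (r / (r + 1))

theorem powConjConst_nonneg {r : ℝ} (hr : 0 < r) : 0 ≤ powConjConst r := by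
  unfold powConjConst
  positivity

/-- Young's inequality with exponents `r + 1` and `(r + 1) / r`, applied to `l t` and `x^r / l`
where `l^{r+1} = r + 1`. -/
theorem mul_rpow_sub_rpow_le {r t x : ℝ} (hr : 0 < r) (ht : 0 ≤ t) (hx : 0 ≤ x) :
    t * x ^ r - t ^ (r + 1) ≤ powConjConst r * x ^ (r + 1) := by
  have hr1 : 0 < r + 1 := by linarith
  have hpq : (r + 1).HolderConjugate ((r + 1) / r) :=
    ⟨by field_simp; ring, by linarith, by positivity⟩
  set l : ℝ := (r + 1) ^ (1 / (r + 1)) with hl_def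
  have hl : 0 < l := by positivity
  have hlp : l ^ (r + 1) = r + 1 := by
    rw [hl_def, ← rpow_mul hr1.le, one_div_mul_cancel hr1.ne', rpow_one]
  have hlq : l ^ ((r + 1) / r) = (r + 1) ^ (1 / r) := by
    rw [hl_def, ← rpow_mul hr1.le]
    congr 1
    field_simp
  have hxq : (x ^ r) ^ ((r + 1) / r) = x ^ (r + 1) := by
    rw [← rpow_mul hx]
    congr 1
    field_simp
  have hyoung := young_inequality_of_nonneg (mul_nonneg hl.le ht)
    (div_nonneg (rpow_nonneg hx r) hl.le) hpq
  have hprod : l * t * (x ^ r / l) = t * x ^ r := by field_simp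
  have hfirst : (l * t) ^ (r + 1) / (r + 1) = t ^ (r + 1) := by
    rw [mul_rpow hl.le ht, hlp]
    field_simp
  have hsecond : (x ^ r / l) ^ ((r + 1) / r) / ((r + 1) / r) = powConjConst r * x ^ (r + 1) := by
    rw [div_rpow (rpow_nonneg hx r) hl.le, hxq, hlq, powConjConst, one_div (r + 1),
      inv_rpow hr1.le]
    have : (r + 1) ^ (1 / r) ≠ 0 := by positivity
    field_simp
  rw [hprod, hfirst, hsecond] at hyoung
  linarith

theorem mul_sum_sub_sum_le {ι : Type*} [Fintype ι] {r ε a : ι → ℝ} {t x : ℝ}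
    (hr : ∀ i, 0 < r i) (ha : ∀ i, 0 ≤ a i ∧ a i ≤ ε i) (ht : 0 ≤ t) (hx : 0 ≤ x) :
    t * ∑ i, a i * x ^ r i - ∑ i, ε i * t ^ (r i + 1) ≤
      ∑ i, a i * powConjConst (r i) * x ^ (r i + 1) := by
  rw [mul_sum, ← sum_sub_distrib]
  refine sum_le_sum fun i _ => ?_
  have hyoung := mul_le_mul_of_nonneg_left (mul_rpow_sub_rpow_le (hr i) ht hx) (ha i).1
  have hεa := mul_le_mul_of_nonneg_right (ha i).2 (rpow_nonneg ht (r i + 1))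
  linarith

theorem youngConj_sum_rpow_le {ι : Type*} [Fintype ι] {r ε a : ι → ℝ} {x y : ℝ}
    (hr : ∀ i, 0 < r i) (ha : ∀ i, 0 ≤ a i ∧ a i ≤ ε i) (hx : 0 ≤ x)
    (hy : |y| ≤ ∑ i, a i * x ^ r i) :
    youngConj (fun t => ∑ i, ε i * |t| ^ (r i + 1)) y ≤
      ∑ i, a i * powConjConst (r i) * x ^ (r i + 1) := by
  refine youngConj_le (sum_nonneg fun i _ => ?_) fun t ht => ?_
  · have := powConjConst_nonneg (hr i)
    have := (ha i).1
    positivity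
  · simp only [abs_of_nonneg ht]
    have := mul_le_mul_of_nonneg_left hy ht
    linarith [mul_sum_sub_sum_le (ε := ε) hr ha ht hx]

theorem sum_mul_le_mul_sum_of_div_le {ι : Type*} (s : Finset ι) {u ε w : ι → ℝ} {C : ℝ}
    (hε : ∀ i ∈ s, 0 < ε i) (hw : ∀ i ∈ s, 0 ≤ w i) (hC : ∀ i ∈ s, u i / ε i ≤ C) :
    ∑ i ∈ s, u i * w i ≤ C * ∑ i ∈ s, ε i * w i := by
  rw [mul_sum]
  refine sum_le_sum fun i hi => ?_
  have hu : u i ≤ C * ε i := (div_le_iff₀ (hε i hi)).1 (hC i hi)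
  calc u i * w i ≤ C * ε i * w i := mul_le_mul_of_nonneg_right hu (hw i hi)
    _ = C * (ε i * w i) := mul_assoc _ _ _

theorem stmt8_general (m : ℕ) (r ε a : Fin m → ℝ)
    (hr : ∀ i, 0 < r i) (hε : ∀ i, 0 < ε i)
    (ha : ∀ i, 0 ≤ a i ∧ a i ≤ ε i)
    (Φ₀ : ℝ → ℝ) (hΦ : ∀ s : ℝ, |Φ₀ s| ≤ ∑ i, a i * |s| ^ r i)
    (ctil : ℝ)
    (hctil : IsGreatest
      (Set.range fun i =>
        a i * ((1 / (r i + 1)) ^ (1 / r i) * (r i / (r i + 1))) / ε i) ctil) :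
    ∀ s : ℝ,
      youngConj (fun t => ∑ i, ε i * |t| ^ (r i + 1)) (Φ₀ s) ≤
        ∑ i, a i * ((1 / (r i + 1)) ^ (1 / r i) * (r i / (r i + 1))) * |s| ^ (r i + 1) ∧
      youngConj (fun t => ∑ i, ε i * |t| ^ (r i + 1)) (Φ₀ s) ≤
        ctil * ∑ i, ε i * |s| ^ (r i + 1) := by
  intro s
  have hconj : youngConj (fun t => ∑ i, ε i * |t| ^ (r i + 1)) (Φ₀ s) ≤
      ∑ i, a i * powConjConst (r i) * |s| ^ (r i + 1) :=
    youngConj_sum_rpow_le hr ha (abs_nonneg s) (hΦ s)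
  exact ⟨hconj, hconj.trans <| sum_mul_le_mul_sum_of_div_le univ (fun i _ => hε i)
    (fun i _ => rpow_nonneg (abs_nonneg s) _) fun i _ => hctil.2 ⟨i, rfl⟩⟩

/-- Paper Lemma 3.6(ii): for `N(s) = Σ εᵢ |s|^{rᵢ+1}` and `|Φ₀(s)| ≤ Σ aᵢ |s|^{rᵢ}`
with `0 ≤ aᵢ ≤ εᵢ`, one has `N*(Φ₀(s)) ≤ Σ aᵢ cᵢ |s|^{rᵢ+1} ≤ c̃ N(s)` where
`cᵢ = (1/(rᵢ+1))^{1/rᵢ}·rᵢ/(rᵢ+1)` and `c̃ = maxᵢ (aᵢ cᵢ / εᵢ)`. -/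
theorem stmt8 (m : ℕ) (hm : 1 ≤ m) (r ε a : Fin m → ℝ)
    (hr : ∀ i, 0 < r i) (hε : ∀ i, 0 < ε i)
    (ha : ∀ i, 0 ≤ a i ∧ a i ≤ ε i)
    (Φ₀ : ℝ → ℝ) (hΦ : ∀ s : ℝ, |Φ₀ s| ≤ ∑ i, a i * |s| ^ r i)
    (ctil : ℝ)
    (hctil : IsGreatest
      (Set.range fun i =>
        a i * ((1 / (r i + 1)) ^ (1 / r i) * (r i / (r i + 1))) / ε i) ctil) :
    ∀ s : ℝ,
      youngConj (fun t => ∑ i, ε i * |t| ^ (r i + 1)) (Φ₀ s) ≤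
        ∑ i, a i * ((1 / (r i + 1)) ^ (1 / r i) * (r i / (r i + 1))) * |s| ^ (r i + 1) ∧
      youngConj (fun t => ∑ i, ε i * |t| ^ (r i + 1)) (Φ₀ s) ≤
        ctil * ∑ i, ε i * |s| ^ (r i + 1) :=
  stmt8_general m r ε a hr hε ha Φ₀ hΦ ctil hctil
end

section
/- Let N be a Young function, q > 2 and κ ∈ {0,1} with N(r·s) ≤ r^q·(N(s) + 2κ) for all r ≥ 2, s ≥ 0. Let (E,μ) be a σ-finite measure space with μ(E) < ∞ in case κ = 1, let T > 0, let (Ω,P) be a probability space, and let μ̄ := dt ⊗ μ ⊗ P be the product measure on [0,T] × E × Ω (dt = Lebesgue measure on [0,T]). Let f : [0,T] × E × Ω → ℝ be measurable with ‖f(t,·,ω)‖_{L_N(μ)} < ∞ for dt×P-a.e. (t,ω). Then ∫N(f) dμ̄ ≤ (1 + 2·μ(E)·κ) · ∫_Ω ∫_0^T (‖f(t,·,ω)‖_{L_N(μ)} + 2)^q dt P(dω), and consequently ‖f‖_{L_N(μ̄)} ≤ 1 + (1 + 2·μ(E)·κ) · ∫_Ω ∫_0^T (‖f(t,·,ω)‖_{L_N(μ)}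 + 2)^q dt P(dω). In particular L^q([0,T]×Ω → L_N(μ); dt×P) embeds continuously into L_N(μ̄). (Paper Lemma 3.7, continuity of the second embedding.) -/
open Filter MeasureTheory
open scoped ENNReal

/-!
Fix a fibre `g = f (t, ·, ω)` and an admissible `λ`, i.e. `∫ N(g/λ) dμ ≤ 1`. Writing
`|g| = (λ + 2) · (|g| / (λ + 2))` with `λ + 2 ≥ 2`, the growth condition and monotonicity of `N`
on `[0, ∞)` give `N(g) ≤ (λ + 2)^q (N(g/λ) + 2κ)`, hence `∫ N(g) dμ ≤ (1 + 2 μ(E) κ) (λ + 2)^q`.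
Letting `λ` decrease to the Luxemburg norm of `g` and integrating over `(t, ω)` by Tonelli gives
the modular bound. For the norm bound, `λ = 1 + ∫ N(f) dμ̄` is admissible because convexity and
`N 0 = 0` give `N(x/λ) ≤ N(x)/λ` for `λ ≥ 1`.
-/

open Set

namespace IsYoungFunction

variable {N : ℝ → ℝ}

lemma map_zero (hN : IsYoungFunction N) : N 0 = 0 := (hN.2.2.2.2.1 0).2 rfl

lemma map_abs (hN : IsYoungFunction N) (x : ℝ) : N |x| = N x := by
  rcases abs_choice x with h | h <;> simp only [h, hN.2.2.1]

lemma map_mul_le (hN : IsYoungFunction N) {t : ℝ} (ht0 : 0 ≤ t) (ht1 : t ≤ 1) (x : ℝ) :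
    N (t * x) ≤ t * N x := by
  simpa [hN.map_zero] using
    hN.2.1.2 (mem_univ x) (mem_univ 0) ht0 (sub_nonneg.2 ht1) (add_sub_cancel t 1)

lemma monotoneOn (hN : IsYoungFunction N) : MonotoneOn N (Ici 0) := by
  intro a ha b _ hab
  rcases (show (0 : ℝ) ≤ a from ha).eq_or_lt with rfl | ha'
  · simpa [hN.map_zero] using hN.2.2.2.1 b
  have hb : 0 < b := ha'.trans_le hab
  have hab' : a / b ≤ 1 := (div_le_one hb).2 hab
  calc N a = N (a / b * b) := by rw [div_mul_cancel₀ _ hb.ne']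
    _ ≤ a / b * N b := hN.map_mul_le (by positivity) hab' b
    _ ≤ N b := mul_le_of_le_one_left (hN.2.2.2.1 b) hab'

lemma map_div_le (hN : IsYoungFunction N) {lam : ℝ} (hlam : 1 ≤ lam) (x : ℝ) :
    N (x / lam) ≤ N x / lam := by
  simpa [div_eq_inv_mul] using
    hN.map_mul_le (inv_nonneg.2 (zero_le_one.trans hlam)) (inv_le_one_of_one_le₀ hlam) x

lemma le_rpow_mul_of_growth (hN : IsYoungFunction N) {q κ : ℝ}
    (hΔ : ∀ r s : ℝ, 2 ≤ r → 0 ≤ s → N (r * s) ≤ r ^ q * (N s + 2 * κ))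
    {lam : ℝ} (hlam : 0 < lam) (x : ℝ) :
    N x ≤ (lam + 2) ^ q * (N (x / lam) + 2 * κ) := by
  have hr : 0 < lam + 2 := by positivity
  have hmono : N (|x| / (lam + 2)) ≤ N (x / lam) := by
    rw [← hN.map_abs (x / lam), abs_div, abs_of_pos hlam]
    exact hN.monotoneOn (mem_Ici.2 (by positivity)) (mem_Ici.2 (by positivity))
      (div_le_div_of_nonneg_left (abs_nonneg x) hlam (by linarith))
  calc N x = N ((lam + 2) * (|x| / (lam + 2))) := by rw [mul_div_cancel₀ _ hr.ne', hN.map_abs]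
    _ ≤ (lam + 2) ^ q * (N (|x| / (lam + 2)) + 2 * κ) := hΔ _ _ (by linarith) (by positivity)
    _ ≤ (lam + 2) ^ q * (N (x / lam) + 2 * κ) := by gcongr

end IsYoungFunction

section Luxemburg

variable {X : Type*} [MeasurableSpace X] {N : ℝ → ℝ} {μ : Measure X} {f : X → ℝ}

def luxemburgAdmissible (N : ℝ → ℝ) (μ : Measure X) (f : X → ℝ) : Set ℝ :=
  {lam | 0 < lam ∧ ∫⁻ x, ENNReal.ofReal (N (f x / lam)) ∂μ ≤ 1}

lemma luxemburgNorm_eq_sInf :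
    luxemburgNorm N μ f = sInf (ENNReal.ofReal '' luxemburgAdmissible N μ f) := by
  rw [sInf_image, luxemburgNorm]
  exact iInf_congr fun _ => (iInf_and (s := fun _ => _)).symm

lemma luxemburgNorm_le_ofReal {lam : ℝ} (h : lam ∈ luxemburgAdmissible N μ f) :
    luxemburgNorm N μ f ≤ ENNReal.ofReal lam :=
  luxemburgNorm_eq_sInf (N := N) (μ := μ) (f := f) ▸ sInf_le (mem_image_of_mem _ h)

lemma le_map_luxemburgNorm {Φ : ℝ≥0∞ → ℝ≥0∞} {c : ℝ≥0∞} (hfin : luxemburgNorm N μ f < ⊤)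
    (hΦ : ContinuousAt Φ (luxemburgNorm N μ f))
    (h : ∀ lam ∈ luxemburgAdmissible N μ f, c ≤ Φ (ENNReal.ofReal lam)) :
    c ≤ Φ (luxemburgNorm N μ f) := by
  rw [luxemburgNorm_eq_sInf] at hfin hΦ ⊢
  obtain ⟨_, hmem, -⟩ := sInf_lt_iff.1 hfin
  refine closure_minimal ?_ isClosed_Ici (mem_closure_image hΦ (sInf_mem_closure ⟨_, hmem⟩))
  rintro _ ⟨_, ⟨lam, hlam, rfl⟩, rfl⟩
  exact h lam hlam

lemma lintegral_le_of_mem_luxemburgAdmissible (hN : IsYoungFunction N) {q κ : ℝ}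
    (hΔ : ∀ r s : ℝ, 2 ≤ r → 0 ≤ s → N (r * s) ≤ r ^ q * (N s + 2 * κ))
    {lam : ℝ} (hlam : lam ∈ luxemburgAdmissible N μ f) :
    ∫⁻ x, ENNReal.ofReal (N (f x)) ∂μ ≤
      (1 + 2 * μ univ * ENNReal.ofReal κ) * (ENNReal.ofReal lam + 2) ^ q := by
  obtain ⟨hlam0, hint⟩ := hlam
  have hpt : ∀ x, ENNReal.ofReal (N (f x)) ≤
      ENNReal.ofReal ((lam + 2) ^ q) * (ENNReal.ofReal (N (f x / lam)) + 2 * ENNReal.ofReal κ) := by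
    intro x
    rw [← ENNReal.ofReal_ofNat 2, ← ENNReal.ofReal_mul zero_le_two]
    calc ENNReal.ofReal (N (f x))
        ≤ ENNReal.ofReal ((lam + 2) ^ q * (N (f x / lam) + 2 * κ)) :=
          ENNReal.ofReal_le_ofReal (hN.le_rpow_mul_of_growth hΔ hlam0 _)
      _ ≤ _ := by rw [ENNReal.ofReal_mul (by positivity)]; gcongr; exact ENNReal.ofReal_add_le
  have hr : ENNReal.ofReal lam + 2 = ENNReal.ofReal (lam + 2) := by
    rw [ENNReal.ofReal_add hlam0.le zero_le_two, ENNReal.ofReal_ofNat]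
  calc ∫⁻ x, ENNReal.ofReal (N (f x)) ∂μ
      ≤ ∫⁻ x, ENNReal.ofReal ((lam + 2) ^ q) *
          (ENNReal.ofReal (N (f x / lam)) + 2 * ENNReal.ofReal κ) ∂μ := lintegral_mono hpt
    _ = ENNReal.ofReal ((lam + 2) ^ q) *
          (∫⁻ x, ENNReal.ofReal (N (f x / lam)) ∂μ + 2 * ENNReal.ofReal κ * μ univ) := by
        rw [lintegral_const_mul' _ _ ENNReal.ofReal_ne_top, lintegral_add_right _ measurable_const,
          lintegral_const]
    _ ≤ ENNReal.ofReal ((lam + 2) ^ q) * (1 + 2 * ENNReal.ofReal κ * μ univ) := by gcongr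
    _ = (1 + 2 * μ univ * ENNReal.ofReal κ) * (ENNReal.ofReal lam + 2) ^ q := by
        rw [hr, ← ENNReal.ofReal_rpow_of_pos (by positivity)]; ring

lemma lintegral_le_luxemburgNorm_add_two_rpow (hN : IsYoungFunction N) {q κ : ℝ}
    (hΔ : ∀ r s : ℝ, 2 ≤ r → 0 ≤ s → N (r * s) ≤ r ^ q * (N s + 2 * κ))
    (hfin : luxemburgNorm N μ f < ⊤) :
    ∫⁻ x, ENNReal.ofReal (N (f x)) ∂μ ≤
      (1 + 2 * μ univ * ENNReal.ofReal κ) * (luxemburgNorm N μ f + 2) ^ q := by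
  refine le_map_luxemburgNorm (Φ := fun L => (1 + 2 * μ univ * ENNReal.ofReal κ) * (L + 2) ^ q)
    hfin ?_ fun lam hlam => lintegral_le_of_mem_luxemburgAdmissible hN hΔ hlam
  have hpos : (luxemburgNorm N μ f + 2) ^ q ≠ 0 :=
    (ENNReal.rpow_pos (by simp) (by simpa using hfin.ne)).ne'
  exact ENNReal.Tendsto.const_mul ((ENNReal.continuous_rpow_const.tendsto _).comp
    ((continuous_id.add continuous_const).tendsto _)) (Or.inl hpos)

lemma luxemburgNorm_le_one_add_lintegral (hN : IsYoungFunction N) (μ : Measure X) (f : X → ℝ) :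
    luxemburgNorm N μ f ≤ 1 + ∫⁻ x, ENNReal.ofReal (N (f x)) ∂μ := by
  set I := ∫⁻ x, ENNReal.ofReal (N (f x)) ∂μ
  rcases eq_or_ne I ⊤ with hI | hI
  · simp [hI]
  have h1I : 1 + I ≠ ⊤ := ENNReal.add_ne_top.2 ⟨ENNReal.one_ne_top, hI⟩
  set lam := (1 + I).toReal
  have hlam1 : 1 ≤ lam := ENNReal.toReal_one ▸ ENNReal.toReal_mono h1I le_self_add
  have hlam : ENNReal.ofReal lam = 1 + I := ENNReal.ofReal_toReal h1I
  rw [← hlam]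
  refine luxemburgNorm_le_ofReal ⟨by linarith, ?_⟩
  calc ∫⁻ x, ENNReal.ofReal (N (f x / lam)) ∂μ
      ≤ ∫⁻ x, ENNReal.ofReal (N (f x)) * (ENNReal.ofReal lam)⁻¹ ∂μ := by
        refine lintegral_mono fun x => ?_
        rw [← div_eq_mul_inv, ← ENNReal.ofReal_div_of_pos (by linarith)]
        exact ENNReal.ofReal_le_ofReal (hN.map_div_le hlam1 _)
    _ = I / (1 + I) := by
        rw [lintegral_mul_const' _ _ (by simp [hlam]), hlam, div_eq_mul_inv]
    _ ≤ 1 := ENNReal.div_le_of_le_mul (by rw [one_mul]; exact le_add_self)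

end Luxemburg

lemma lintegral_prod_prod_eq_lintegral_lintegral {α β γ : Type*} [MeasurableSpace α]
    [MeasurableSpace β] [MeasurableSpace γ] (ν : Measure α) (μ : Measure β) (P : Measure γ)
    [SFinite ν] [SFinite μ] [SFinite P] {F : α × β × γ → ℝ≥0∞} (hF : Measurable F) :
    ∫⁻ x, F x ∂(ν.prod (μ.prod P)) = ∫⁻ p, ∫⁻ b, F (p.1, b, p.2) ∂μ ∂(ν.prod P) := by
  have hmid : Measurable fun p : α × γ => ∫⁻ b, F (p.1, b, p.2) ∂μ :=
    Measurable.lintegral_prod_right' (f := fun x : (α × γ) × β => F (x.1.1, x.2, x.1.2))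
      (hF.comp (by fun_prop))
  rw [lintegral_prod _ hF.aemeasurable, lintegral_prod _ hmid.aemeasurable]
  congr with a
  exact lintegral_prod_symm _ (hF.comp measurable_prodMk_left).aemeasurable

theorem stmt14_general {E Ω : Type*} [MeasurableSpace E] [MeasurableSpace Ω]
    (μ : Measure E) [SigmaFinite μ] (P : Measure Ω) [IsProbabilityMeasure P]
    (N : ℝ → ℝ) (hN : IsYoungFunction N) (q κ : ℝ) (hκ : κ = 0 ∨ κ = 1)
    (hΔ : ∀ r s : ℝ, 2 ≤ r → 0 ≤ s → N (r * s) ≤ r ^ q * (N s + 2 * κ))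
    (hfin : κ = 1 → μ Set.univ < ⊤)
    (T : ℝ)
    (f : ℝ × E × Ω → ℝ) (hf : Measurable f)
    (hfib : ∀ᵐ p ∂((volume.restrict (Set.Icc (0:ℝ) T)).prod P),
      luxemburgNorm N μ (fun e => f (p.1, e, p.2)) < ⊤) :
    (∫⁻ x, ENNReal.ofReal (N (f x))
        ∂((volume.restrict (Set.Icc (0:ℝ) T)).prod (μ.prod P))) ≤
      (1 + 2 * μ Set.univ * ENNReal.ofReal κ) *
        ∫⁻ p, (luxemburgNorm N μ (fun e => f (p.1, e, p.2)) + 2) ^ q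
          ∂((volume.restrict (Set.Icc (0:ℝ) T)).prod P) ∧
    luxemburgNorm N ((volume.restrict (Set.Icc (0:ℝ) T)).prod (μ.prod P)) f ≤
      1 + (1 + 2 * μ Set.univ * ENNReal.ofReal κ) *
        ∫⁻ p, (luxemburgNorm N μ (fun e => f (p.1, e, p.2)) + 2) ^ q
          ∂((volume.restrict (Set.Icc (0:ℝ) T)).prod P) := by
  have hC : 1 + 2 * μ univ * ENNReal.ofReal κ ≠ ⊤ := by
    rcases hκ with rfl | rfl
    · simp
    · simpa [ENNReal.mul_eq_top] using (hfin rfl).ne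
  have hF : Measurable fun x => ENNReal.ofReal (N (f x)) :=
    ENNReal.measurable_ofReal.comp (hN.1.measurable.comp hf)
  have hbound := calc
    ∫⁻ x, ENNReal.ofReal (N (f x)) ∂((volume.restrict (Icc (0:ℝ) T)).prod (μ.prod P))
      = ∫⁻ p, ∫⁻ e, ENNReal.ofReal (N (f (p.1, e, p.2))) ∂μ
          ∂((volume.restrict (Icc (0:ℝ) T)).prod P) :=
        lintegral_prod_prod_eq_lintegral_lintegral _ _ _ hF
    _ ≤ ∫⁻ p, (1 + 2 * μ univ * ENNReal.ofReal κ) *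
          (luxemburgNorm N μ (fun e => f (p.1, e, p.2)) + 2) ^ q
          ∂((volume.restrict (Icc (0:ℝ) T)).prod P) :=
        lintegral_mono_ae (hfib.mono fun p hp => lintegral_le_luxemburgNorm_add_two_rpow hN hΔ hp)
    _ = _ := lintegral_const_mul' _ _ hC
  exact ⟨hbound, (luxemburgNorm_le_one_add_lintegral hN _ f).trans (by gcongr)⟩

/-- Paper Lemma 3.7, continuity of the second embedding: on `μ̄ = dt ⊗ μ ⊗ P`,
`∫ N(f) dμ̄ ≤ (1 + 2 μ(E) κ) ∫∫ (‖f(t,·,ω)‖_{L_N(μ)} + 2)^q dt P(dω)`, and hence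
`‖f‖_{L_N(μ̄)} ≤ 1 + (1 + 2 μ(E) κ) ∫∫ (‖f(t,·,ω)‖_{L_N(μ)} + 2)^q dt P(dω)`;
i.e. `L^q([0,T]×Ω → L_N(μ))` embeds continuously into `L_N(μ̄)`. -/
theorem stmt14 {E Ω : Type*} [MeasurableSpace E] [MeasurableSpace Ω]
    (μ : Measure E) [SigmaFinite μ] (P : Measure Ω) [IsProbabilityMeasure P]
    (N : ℝ → ℝ) (hN : IsYoungFunction N) (q κ : ℝ) (hq : 2 < q) (hκ : κ = 0 ∨ κ = 1)
    (hΔ : ∀ r s : ℝ, 2 ≤ r → 0 ≤ s → N (r * s) ≤ r ^ q * (N s + 2 * κ))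
    (hfin : κ = 1 → μ Set.univ < ⊤)
    (T : ℝ) (hT : 0 < T)
    (f : ℝ × E × Ω → ℝ) (hf : Measurable f)
    (hfib : ∀ᵐ p ∂((volume.restrict (Set.Icc (0:ℝ) T)).prod P),
      luxemburgNorm N μ (fun e => f (p.1, e, p.2)) < ⊤) :
    (∫⁻ x, ENNReal.ofReal (N (f x))
        ∂((volume.restrict (Set.Icc (0:ℝ) T)).prod (μ.prod P))) ≤
      (1 + 2 * μ Set.univ * ENNReal.ofReal κ) *
        ∫⁻ p, (luxemburgNorm N μ (fun e => f (p.1, e, p.2)) + 2) ^ q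
          ∂((volume.restrict (Set.Icc (0:ℝ) T)).prod P) ∧
    luxemburgNorm N ((volume.restrict (Set.Icc (0:ℝ) T)).prod (μ.prod P)) f ≤
      1 + (1 + 2 * μ Set.univ * ENNReal.ofReal κ) *
        ∫⁻ p, (luxemburgNorm N μ (fun e => f (p.1, e, p.2)) + 2) ^ q
          ∂((volume.restrict (Set.Icc (0:ℝ) T)).prod P) :=
  stmt14_general μ P N hN q κ hκ hΔ hfin T f hf hfib
end
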